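/- Let ε ∈ [0,1) and let M₂ > M₁ ≥ N > 1. Then there exists a linear map L from 2×2 complex matrices to 2×2 complex matrices satisfying L(π_{M₁}) = π_N, L(π_{M₂}) = π_N, and T(L(|1⟩⟨1|), |1⟩⟨1|) ≤ ε, if and only if ε ≥ 1 − 1/N. -/

import Mathlib

open Matrix ComplexOrder

/-- Trace norm of a complex matrix: the trace of `sqrt(AᴴA)` (sum of singular values). -/
noncomputable def traceNorm {n : Type*} [Fintype n] [DecidableEq n]
    (A : Matrix n n ℂ) : ℝ :=
  (((Matrix.posSemidef_conjTranspose_mul_self A).1.eigenvectorUnitary.1 *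
      diagonal (((↑) : ℝ → ℂ) ∘ (√·) ∘ (Matrix.posSemidef_conjTranspose_mul_self A).1.eigenvalues) *
      (star (Matrix.posSemidef_conjTranspose_mul_self A).1.eigenvectorUnitary :
        Matrix n n ℂ)).trace).re

/-- Trace distance `T(X,Y) = ‖X - Y‖₁ / 2`. -/
noncomputable def traceDist {n : Type*} [Fintype n] [DecidableEq n]
    (X Y : Matrix n n ℂ) : ℝ :=
  traceNorm (X - Y) / 2

/-- A density matrix: positive semidefinite with unit trace. -/
def IsDensityMatrix {n : Type*} [Fintype n] (ρ : Matrix n n ℂ) : Prop :=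
  ρ.PosSemidef ∧ ρ.trace = 1

/-- The battery Gibbs state `π_M = diag(1 - 1/M, 1/M)`. -/
noncomputable def piM (M : ℝ) : Matrix (Fin 2) (Fin 2) ℂ :=
  Matrix.diagonal ![((1 - 1/M : ℝ) : ℂ), ((1/M : ℝ) : ℂ)]

/-- The excited battery state `|1⟩⟨1| = diag(0,1)`. -/
def ket1 : Matrix (Fin 2) (Fin 2) ℂ :=
  Matrix.diagonal ![0, 1]

/-- A test (POVM effect): `0 ≤ E ≤ I`. -/
def IsTest {n : Type*} [Fintype n] [DecidableEq n] (E : Matrix n n ℂ) : Prop :=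
  E.PosSemidef ∧ (1 - E).PosSemidef

/-- Choi matrix `Σ_{ij} E_{ij} ⊗ F(E_{ij})` of a linear map on matrices. -/
noncomputable def choiMatrix {n m : Type*} [Fintype n] [DecidableEq n] [Fintype m]
    (F : Matrix n n ℂ →ₗ[ℂ] Matrix m m ℂ) :
    Matrix (n × m) (n × m) ℂ :=
  fun p q => F (Matrix.single p.1 q.1 1) p.2 q.2

/-- Completely positive (positive semidefinite Choi matrix) and trace preserving. -/
def IsCPTP {n m : Type*} [Fintype n] [DecidableEq n] [Fintype m]
    (F : Matrix n n ℂ →ₗ[ℂ] Matrix m m ℂ) : Prop :=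
  (choiMatrix F).PosSemidef ∧ ∀ X, (F X).trace = X.trace

/-- `n`-fold Kronecker (tensor) power of a `2 × 2` matrix, indexed by bit strings. -/
def tensPow (A : Matrix (Fin 2) (Fin 2) ℂ) (n : ℕ) :
    Matrix (Fin n → Fin 2) (Fin n → Fin 2) ℂ :=
  fun x y => ∏ i, A (x i) (y i)

/-- `ε`-ball (in trace distance) of density matrices around a set `𝓟`. -/
noncomputable def metBall {n : Type*} [Fintype n] [DecidableEq n]
    (ε : ℝ) (P : Set (Matrix n n ℂ)) : Set (Matrix n n ℂ) :=
  {ω | IsDensityMatrix ω ∧ ∃ ρ ∈ P, traceDist ω ρ ≤ ε}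

/-!
`π_M` is affine in `1/M` and `|1⟩⟨1| = π_1`. A linear map taking the same value `π_N` at two
distinct points `π_{M₁}`, `π_{M₂}` of this line is therefore constant on it, so it sends `|1⟩⟨1|`
to `π_N`, at trace distance exactly `1 - 1/N`. Conversely, the replacement map `X ↦ tr(X) π_N`
attains this distance.
-/

section TraceNorm

variable {n : Type*} [Fintype n] [DecidableEq n]

lemma traceNorm_eq_sum_sqrt_eigenvalues (A : Matrix n n ℂ) :
    traceNorm A = ∑ i, √((posSemidef_conjTranspose_mul_self A).1.eigenvalues i) := by
  rw [traceNorm, trace_mul_cycle, Unitary.coe_star_mul_self, one_mul, trace_diagonal]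
  simp [Complex.re_sum]

lemma Matrix.IsHermitian.eigenvalues_eq_of_eq_algebraMap {A : Matrix n n ℂ} (hA : A.IsHermitian)
    {c : ℝ} (h : A = algebraMap ℝ _ c) (i : n) : hA.eigenvalues i = c := by
  have : Nonempty n := ⟨i⟩
  simpa [h, spectrum.scalar_eq] using hA.eigenvalues_mem_spectrum_real i

lemma traceNorm_of_conjTranspose_mul_self_eq_algebraMap {A : Matrix n n ℂ} {c : ℝ}
    (h : Aᴴ * A = algebraMap ℝ _ (c ^ 2)) : traceNorm A = Fintype.card n * |c| := by
  simp [traceNorm_eq_sum_sqrt_eigenvalues, IsHermitian.eigenvalues_eq_of_eq_algebraMap _ h,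
    Real.sqrt_sq_eq_abs]

end TraceNorm

theorem LinearMap.map_add_smul_eq_of_ne {K V W : Type*} [Field K] [AddCommGroup V] [Module K V]
    [AddCommGroup W] [Module K W] (f : V →ₗ[K] W) {x v : V} {a b : K} (hab : a ≠ b)
    (h : f (x + a • v) = f (x + b • v)) (c : K) : f (x + c • v) = f x := by
  have hv : f v = 0 := by
    have : (a - b) • f v = 0 := by
      rw [sub_smul, ← map_smul, ← map_smul, sub_eq_zero]
      simpa using h
    exact (smul_eq_zero.mp this).resolve_left (sub_ne_zero.mpr hab)
  simp [hv]

lemma ket1_eq_piM_one : ket1 = piM 1 := by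
  ext i j
  fin_cases i <;> fin_cases j <;> simp [ket1, piM]

lemma piM_eq_add_smul (M : ℝ) : piM M = piM 0 + (M : ℂ)⁻¹ • (piM 1 - piM 0) := by
  ext i j
  fin_cases i <;> fin_cases j <;> simp [piM, sub_eq_add_neg]

lemma trace_piM (M : ℝ) : (piM M).trace = 1 := by
  simp [piM, trace_diagonal, Fin.sum_univ_two]

lemma traceDist_piM_ket1 (N : ℝ) : traceDist (piM N) ket1 = |1 - 1 / N| := by
  have h : (piM N - ket1)ᴴ * (piM N - ket1) = algebraMap ℝ _ ((1 - 1 / N) ^ 2) := by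
    rw [Algebra.algebraMap_eq_smul_one]
    ext i j
    fin_cases i <;> fin_cases j <;> simp [piM, ket1, Matrix.mul_apply, Fin.sum_univ_two] <;> ring
  rw [traceDist, traceNorm_of_conjTranspose_mul_self_eq_algebraMap h]
  simp

lemma map_piM_eq_of_ne {m : Type*} [Fintype m]
    (L : Matrix (Fin 2) (Fin 2) ℂ →ₗ[ℂ] Matrix m m ℂ) {M₁ M₂ : ℝ} (hM : M₁ ≠ M₂)
    (h : L (piM M₁) = L (piM M₂)) (M : ℝ) : L (piM M) = L (piM M₁) := by
  have hinv : (M₁ : ℂ)⁻¹ ≠ (M₂ : ℂ)⁻¹ := by simpa using hM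
  rw [piM_eq_add_smul M₁, piM_eq_add_smul M₂] at h
  rw [piM_eq_add_smul M, piM_eq_add_smul M₁, L.map_add_smul_eq_of_ne hinv h,
    L.map_add_smul_eq_of_ne hinv h]

theorem stmt_3_general (ε M₁ M₂ N : ℝ)
    (hN : 1 < N) (hM₂ : M₁ < M₂) :
    (∃ L : Matrix (Fin 2) (Fin 2) ℂ →ₗ[ℂ] Matrix (Fin 2) (Fin 2) ℂ,
        L (piM M₁) = piM N ∧ L (piM M₂) = piM N ∧
        traceDist (L ket1) ket1 ≤ ε) ↔
      ε ≥ 1 - 1/N := by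
  have hdist : traceDist (piM N) ket1 = 1 - 1 / N := by
    rw [traceDist_piM_ket1, abs_of_nonneg (sub_nonneg.mpr ((div_le_one (by linarith)).mpr hN.le))]
  constructor
  · rintro ⟨L, h₁, h₂, hε⟩
    have hL : L ket1 = piM N := by
      rw [ket1_eq_piM_one, map_piM_eq_of_ne L hM₂.ne (h₁.trans h₂.symm), h₁]
    rwa [hL, hdist] at hε
  · intro hε
    set R := (traceLinearMap (Fin 2) ℂ ℂ).smulRight (piM N)
    have hR : ∀ M, R (piM M) = piM N := fun M => by simp [R, trace_piM]
    refine ⟨R, hR M₁, hR M₂, ?_⟩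
    rwa [ket1_eq_piM_one, hR, ← ket1_eq_piM_one, hdist]

/-- no universal energy truncation for dirty batteries. -/
theorem stmt_3 (ε M₁ M₂ N : ℝ) (hε : ε ∈ Set.Ico (0:ℝ) 1)
    (hN : 1 < N) (hM₁ : N ≤ M₁) (hM₂ : M₁ < M₂) :
    (∃ L : Matrix (Fin 2) (Fin 2) ℂ →ₗ[ℂ] Matrix (Fin 2) (Fin 2) ℂ,
        L (piM M₁) = piM N ∧ L (piM M₂) = piM N ∧
        traceDist (L ket1) ket1 ≤ ε) ↔
      ε ≥ 1 - 1/N :=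
  stmt_3_general ε M₁ M₂ N hN hM₂
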